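/- The quotient of the free abelian group ℤ² by the subgroup generated by the two vectors (8, −7) and (−6, 7) is a cyclic group of order 14, i.e. it is isomorphic to ℤ/14ℤ. -/
import Mathlib

theorem quotient_Z2_cyclic_14 :
    Nonempty
      ((ℤ × ℤ) ⧸ AddSubgroup.closure ({(8, -7), (-6, 7)} : Set (ℤ × ℤ)) ≃+ ZMod 14) := by
  set S : Set (ℤ × ℤ) := {(8, -7), (-6, 7)} with hS
  let φ : ℤ × ℤ →+ ZMod 14 :=
    { toFun := fun p => 7 * (p.1 : ZMod 14) + 2 * (p.2 : ZMod 14)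
      map_zero' := by simp
      map_add' := by
        intro p q
        simp only [Prod.fst_add, Prod.snd_add]
        push_cast
        ring }
  have h20 : ((2, 0) : ℤ × ℤ) ∈ AddSubgroup.closure S := by
    have : ((2, 0) : ℤ × ℤ) = (8, -7) + (-6, 7) := by decide
    rw [this]
    exact AddSubgroup.add_mem _ (AddSubgroup.subset_closure (by simp [hS]))
      (AddSubgroup.subset_closure (by simp [hS]))
  have h07 : ((0, 7) : ℤ × ℤ) ∈ AddSubgroup.closure S := by
    have : ((0, 7) : ℤ × ℤ) = (4 : ℤ) • ((2, 0) : ℤ × ℤ) + -(8, -7) := by decide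
    rw [this]
    exact AddSubgroup.add_mem _ (AddSubgroup.zsmul_mem _ h20 _)
      (AddSubgroup.neg_mem _ (AddSubgroup.subset_closure (by simp [hS])))
  have hker : AddSubgroup.closure S = φ.ker := by
    apply le_antisymm
    · rw [AddSubgroup.closure_le]
      rintro x (rfl | rfl) <;> simp [φ, AddMonoidHom.mem_ker] <;> decide
    · rintro ⟨a, b⟩ h
      have h0 : (((7 * a + 2 * b : ℤ) : ZMod 14)) = 0 := by
        push_cast
        simpa [φ, AddMonoidHom.mem_ker] using h
      rw [ZMod.intCast_zmod_eq_zero_iff_dvd] at h0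
      have h2 : (2 : ℤ) ∣ a := by omega
      have h7 : (7 : ℤ) ∣ b := by omega
      obtain ⟨c, rfl⟩ := h2
      obtain ⟨d, rfl⟩ := h7
      have : ((2 * c, 7 * d) : ℤ × ℤ) = c • ((2, 0) : ℤ × ℤ) + d • ((0, 7) : ℤ × ℤ) := by
        simp [Prod.ext_iff, mul_comm]
      rw [this]
      exact AddSubgroup.add_mem _ (AddSubgroup.zsmul_mem _ h20 _)
        (AddSubgroup.zsmul_mem _ h07 _)
  have hsurj : Function.Surjective φ := by
    intro x
    obtain ⟨n, rfl⟩ := ZMod.intCast_surjective x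
    exact ⟨(n, -3 * n), by simp [φ]; ring⟩
  exact ⟨(QuotientAddGroup.quotientAddEquivOfEq hker).trans
    (QuotientAddGroup.quotientKerEquivOfSurjective φ hsurj)⟩
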